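/- For any commutative Noetherian ring R, Γ_E(R) is not a cycle graph; in particular, Γ_E(R) contains no induced path of length five whose endpoints have degree 2. Concretely: if [x]—[y]—[z]—[w]—[v] is a path of distinct vertices in Γ_E(R), then yw is a nonzero zero divisor whose class is adjacent to [x], [z], and [v], which is impossible in a cycle graph. -/

import Mathlib

open scoped Classical

noncomputable section

/-- The annihilator ideal of an element `x` of a commutative ring `R`. -/
def ann (R : Type*) [CommRing R] (x : R) : Ideal R := Ideal.torsionOf R R x

/-- The type of nonzero zero divisors of `R`. -/
def ZD (R : Type*) [CommRing R] : Type _ :=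
  {x : R // x ≠ 0 ∧ ∃ y : R, y ≠ 0 ∧ x * y = 0}

/-- Two zero divisors are equivalent iff they have the same annihilator. -/
instance annSetoid (R : Type*) [CommRing R] : Setoid (ZD R) :=
  ⟨fun a b => ann R a.1 = ann R b.1,
   fun _ => rfl, Eq.symm, Eq.trans⟩

/-- The vertex set of `Γ_E(R)`: equivalence classes of nonzero zero divisors. -/
def GammaEV (R : Type*) [CommRing R] : Type _ := Quotient (annSetoid R)

/-- The class of a nonzero zero divisor. -/
def cls (R : Type*) [CommRing R] (a : ZD R) : GammaEV R :=
  Quotient.mk (annSetoid R) a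

/-- The graph `Γ_E(R)` of equivalence classes of zero divisors. -/
def gammaE (R : Type*) [CommRing R] : SimpleGraph (GammaEV R) where
  Adj u v := u ≠ v ∧ ∃ a b : ZD R, cls R a = u ∧ cls R b = v ∧ a.1 * b.1 = 0
  symm := by
    constructor
    rintro u v ⟨huv, a, b, ha, hb, hab⟩
    exact ⟨huv.symm, b, a, hb, ha, by rwa [mul_comm] at hab⟩
  loopless := by constructor; rintro u ⟨h, -⟩; exact h rfl

/-- `I` is a maximal element of the family `F = {ann x : 0 ≠ x ∈ R}`. -/
def MaxAnn (R : Type*) [CommRing R] (I : Ideal R) : Prop :=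
  (∃ x : R, x ≠ 0 ∧ I = ann R x) ∧
    ∀ y : R, y ≠ 0 → I ≤ ann R y → I = ann R y

/-!
Two elements with the same annihilator annihilate the same elements, so for `[a] ≠ [b]` the
product `a b` vanishes exactly when `[a]` and `[b]` are adjacent. Given a path
`[x]—[y]—[z]—[w]—[v]` with `[y] ≠ [w]` not adjacent, `y w ≠ 0` is killed by `x`, `z` and `v`, so
its class lies in the closed neighbourhoods of `[x]`, `[z]` and `[v]`; in a cycle of length at
least five no vertex does.

In cycles of length three or four, pick `m` with `ann m` maximal among the finitely many vertex
annihilators. Every nonzero `x ∈ ann m` has its class in the closed neighbourhood of `[m]`, which in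
such a short cycle is covered by the neighbourhoods of two vertices `[j]`, `[k]` other than `[m]`.
Hence `ann m ⊆ ann j ∪ ann k`, so `ann m` lies in one of them and maximality forces `[m] = [j]`
or `[m] = [k]`.
-/

open SimpleGraph

namespace SimpleGraph

variable {V W : Type*}

/-- `N[v] ⊆ N(j) ∪ N(k)` for two vertices `j, k` other than `v`. -/
def ClosedNbhdCoveredByPair (G : SimpleGraph V) (v : V) : Prop :=
  ∃ j k, j ≠ v ∧ k ≠ v ∧ ∀ l, (l = v ∨ G.Adj l v) → G.Adj l j ∨ G.Adj l k

lemma ClosedNbhdCoveredByPair.of_iso {G : SimpleGraph V} {H : SimpleGraph W} (φ : G ≃g H)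
    {v : V} (h : H.ClosedNbhdCoveredByPair (φ v)) : G.ClosedNbhdCoveredByPair v := by
  obtain ⟨j, k, hj, hk, hcov⟩ := h
  refine ⟨φ.symm j, φ.symm k, ?_, ?_, fun l hl => ?_⟩
  · rw [Ne, φ.symm_apply_eq]; exact hj
  · rw [Ne, φ.symm_apply_eq]; exact hk
  · have hl' : φ l = φ v ∨ H.Adj (φ l) (φ v) := hl.imp (congrArg φ) φ.map_adj_iff.2
    simpa only [← φ.map_adj_iff, φ.apply_symm_apply] using hcov (φ l) hl'

lemma cycleGraph_closedNbhdCoveredByPair {n : ℕ} (h3 : 3 ≤ n) (h4 : n ≤ 4) (i : Fin n) :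
    (cycleGraph n).ClosedNbhdCoveredByPair i := by
  unfold ClosedNbhdCoveredByPair
  interval_cases n <;> revert i <;> decide

lemma cycleGraph_adj_iff_val {n : ℕ} (hn : 2 ≤ n) {u v : Fin n} :
    (cycleGraph n).Adj u v ↔
      u.val + 1 = v.val ∨ v.val + 1 = u.val ∨ u.val + 1 = n ∧ v.val = 0 ∨
        v.val + 1 = n ∧ u.val = 0 := by
  have hu := u.isLt
  have hv := v.isLt
  rw [cycleGraph_adj']
  rcases lt_trichotomy u v with h | rfl | h
  · rw [Fin.coe_sub_iff_lt.2 h, Fin.sub_val_of_le h.le]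
    rw [Fin.lt_def] at h
    omega
  · rw [Fin.sub_val_of_le le_rfl]
    omega
  · rw [Fin.coe_sub_iff_lt.2 h, Fin.sub_val_of_le h.le]
    rw [Fin.lt_def] at h
    omega

end SimpleGraph

section ZeroDivisorGraph

variable {R : Type*} [CommRing R]

lemma mem_ann_iff {x r : R} : r ∈ ann R x ↔ r * x = 0 := by
  simp [ann, Ideal.mem_torsionOf_iff]

lemma cls_surjective : Function.Surjective (cls R) := Quotient.mk_surjective

lemma cls_eq_cls_iff {a b : ZD R} : cls R a = cls R b ↔ ann R a.1 = ann R b.1 := Quotient.eq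

lemma mul_eq_zero_iff_of_cls_eq {a b : ZD R} (h : cls R a = cls R b) (r : R) :
    a.1 * r = 0 ↔ b.1 * r = 0 := by
  rw [mul_comm, ← mem_ann_iff, cls_eq_cls_iff.1 h, mem_ann_iff, mul_comm]

lemma mul_eq_zero_of_adj {a b : ZD R} (h : (gammaE R).Adj (cls R a) (cls R b)) :
    a.1 * b.1 = 0 := by
  obtain ⟨-, a', b', ha, hb, hab⟩ := h
  rwa [← mul_eq_zero_iff_of_cls_eq ha, mul_comm, ← mul_eq_zero_iff_of_cls_eq hb, mul_comm]

lemma cls_eq_or_adj_of_mul_eq_zero {a b : ZD R} (h : a.1 * b.1 = 0) :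
    cls R a = cls R b ∨ (gammaE R).Adj (cls R a) (cls R b) :=
  or_iff_not_imp_left.2 fun hne => ⟨hne, a, b, rfl, rfl, h⟩

lemma mul_ne_zero_of_not_adj {a b : ZD R} (hne : cls R a ≠ cls R b)
    (h : ¬ (gammaE R).Adj (cls R a) (cls R b)) : a.1 * b.1 ≠ 0 :=
  fun hab => h ⟨hne, a, b, rfl, rfl, hab⟩

lemma exists_maximal_ann [Finite (GammaEV R)] [Nonempty (ZD R)] :
    ∃ m : ZD R, ∀ a : ZD R, ann R m.1 ≤ ann R a.1 → ann R a.1 ≤ ann R m.1 := by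
  have hfin : ((fun a : ZD R => ann R a.1) '' Set.univ).Finite := by
    refine (Set.finite_range fun u : GammaEV R => ann R u.out.1).subset ?_
    rintro _ ⟨a, -, rfl⟩
    exact ⟨cls R a, cls_eq_cls_iff.1 (Quotient.out_eq _)⟩
  obtain ⟨m, -, hm⟩ := Set.Finite.exists_maximalFor' _ _ hfin Set.univ_nonempty
  exact ⟨m, fun a => hm trivial⟩

lemma not_closedNbhdCoveredByPair_of_maximal_ann {m : ZD R}
    (hmax : ∀ a : ZD R, ann R m.1 ≤ ann R a.1 → ann R a.1 ≤ ann R m.1) :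
    ¬ (gammaE R).ClosedNbhdCoveredByPair (cls R m) := by
  rintro ⟨J, K, hJ, hK, hcov⟩
  obtain ⟨j, rfl⟩ := cls_surjective J
  obtain ⟨k, rfl⟩ := cls_surjective K
  have hsub : (ann R m.1 : Set R) ⊆ ann R j.1 ∪ ann R k.1 := by
    intro x hx
    rw [SetLike.mem_coe, mem_ann_iff] at hx
    by_cases hx0 : x = 0
    · subst hx0
      exact Or.inl (zero_mem _)
    · let x' : ZD R := ⟨x, hx0, m.1, m.2.1, hx⟩
      have hmem : ∀ {a : ZD R}, (gammaE R).Adj (cls R x') (cls R a) → x ∈ ann R a.1 :=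
        fun h => mem_ann_iff.2 (mul_eq_zero_of_adj h)
      exact (hcov (cls R x') (cls_eq_or_adj_of_mul_eq_zero hx)).imp hmem hmem
  rcases Ideal.subset_union.1 hsub with h | h
  · exact hJ (cls_eq_cls_iff.2 (le_antisymm (hmax j h) h))
  · exact hK (cls_eq_cls_iff.2 (le_antisymm (hmax k h) h))

theorem gammaE_not_iso_cycleGraph_of_le_four {n : ℕ} (h3 : 3 ≤ n) (h4 : n ≤ 4)
    (φ : gammaE R ≃g cycleGraph n) : False := by
  have : Finite (GammaEV R) := Finite.of_equiv _ φ.toEquiv.symm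
  have : Nonempty (ZD R) := ⟨(φ.symm ⟨0, by omega⟩).out⟩
  obtain ⟨m, hmax⟩ := exists_maximal_ann (R := R)
  exact not_closedNbhdCoveredByPair_of_maximal_ann hmax
    ((cycleGraph_closedNbhdCoveredByPair h3 h4 (φ (cls R m))).of_iso φ)

theorem gammaE_not_iso_cycleGraph_of_five_le {n : ℕ} (h5 : 5 ≤ n)
    (φ : gammaE R ≃g cycleGraph n) : False := by
  choose A hA using fun i => cls_surjective (φ.symm i)
  have hadj : ∀ i j, (gammaE R).Adj (cls R (A i)) (cls R (A j)) ↔ (cycleGraph n).Adj i j :=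
    fun i j => by rw [hA, hA, φ.symm.map_adj_iff]
  have hstep : ∀ k (hk : k + 1 < n), (A ⟨k, by omega⟩).1 * (A ⟨k + 1, hk⟩).1 = 0 :=
    fun k hk => mul_eq_zero_of_adj <|
      (hadj _ _).2 ((cycleGraph_adj_iff_val (by omega)).2 (.inl rfl))
  have h13 : (A ⟨1, by omega⟩).1 * (A ⟨3, by omega⟩).1 ≠ 0 := by
    refine mul_ne_zero_of_not_adj ?_ ?_
    · simp only [hA, Ne, φ.symm.apply_eq_iff_eq, Fin.ext_iff]
      omega
    · simp only [hadj, cycleGraph_adj_iff_val (by omega : 2 ≤ n)]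
      omega
  let q : ZD R := ⟨_, h13, (A ⟨2, by omega⟩).1, (A ⟨2, by omega⟩).2.1,
    by linear_combination (A ⟨3, by omega⟩).1 * hstep 1 (by omega)⟩
  have hnear : ∀ k (hk : k < n), q.1 * (A ⟨k, hk⟩).1 = 0 →
      (φ (cls R q)).val = k ∨ (cycleGraph n).Adj (φ (cls R q)) ⟨k, hk⟩ := by
    intro k hk hqk
    refine (cls_eq_or_adj_of_mul_eq_zero hqk).imp (fun h => ?_) (fun h => ?_)
    · rw [h, hA, φ.apply_symm_apply]
    · rwa [hA, ← φ.map_adj_iff, φ.apply_symm_apply] at h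
  have h0 := hnear 0 (by omega) (by linear_combination (A ⟨3, by omega⟩).1 * hstep 0 (by omega))
  have h2 := hnear 2 (by omega) (by linear_combination (A ⟨1, by omega⟩).1 * hstep 2 (by omega))
  have h4 := hnear 4 (by omega) (by linear_combination (A ⟨1, by omega⟩).1 * hstep 3 (by omega))
  simp only [cycleGraph_adj_iff_val (by omega : 2 ≤ n)] at h0 h2 h4
  have := (φ (cls R q)).isLt
  omega

end ZeroDivisorGraph

theorem stmt6_general (R : Type*) [CommRing R] :
    (¬ ∃ (n : ℕ) (_ : 3 ≤ n) (e : GammaEV R ≃ Fin n),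
        ∀ u v : GammaEV R,
          (gammaE R).Adj u v ↔ (SimpleGraph.cycleGraph n).Adj (e u) (e v)) ∧
      ∀ x y z w v : ZD R,
        (gammaE R).Adj (cls R x) (cls R y) → (gammaE R).Adj (cls R y) (cls R z) →
        (gammaE R).Adj (cls R z) (cls R w) → (gammaE R).Adj (cls R w) (cls R v) →
        ¬ (gammaE R).Adj (cls R y) (cls R w) → cls R y ≠ cls R w →
        y.1 * w.1 ≠ 0 ∧ (y.1 * w.1) * x.1 = 0 ∧ (y.1 * w.1) * z.1 = 0 ∧
          (y.1 * w.1) * v.1 = 0 := by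
  constructor
  · rintro ⟨n, hn, e, he⟩
    let φ : gammaE R ≃g cycleGraph n := ⟨e, (he _ _).symm⟩
    rcases le_or_gt n 4 with h4 | h5
    · exact gammaE_not_iso_cycleGraph_of_le_four hn h4 φ
    · exact gammaE_not_iso_cycleGraph_of_five_le h5 φ
  · intro x y z w v hxy hyz hzw hwv hyw hne
    refine ⟨mul_ne_zero_of_not_adj hne hyw, ?_, ?_, ?_⟩
    · linear_combination w.1 * mul_eq_zero_of_adj hxy
    · linear_combination y.1 * mul_eq_zero_of_adj hzw
    · linear_combination y.1 * mul_eq_zero_of_adj hwv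

theorem stmt6 (R : Type*) [CommRing R] [IsNoetherianRing R] :
    (¬ ∃ (n : ℕ) (_ : 3 ≤ n) (e : GammaEV R ≃ Fin n),
        ∀ u v : GammaEV R,
          (gammaE R).Adj u v ↔ (SimpleGraph.cycleGraph n).Adj (e u) (e v)) ∧
      ∀ x y z w v : ZD R,
        (gammaE R).Adj (cls R x) (cls R y) → (gammaE R).Adj (cls R y) (cls R z) →
        (gammaE R).Adj (cls R z) (cls R w) → (gammaE R).Adj (cls R w) (cls R v) →
        ¬ (gammaE R).Adj (cls R y) (cls R w) → cls R y ≠ cls R w →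
        y.1 * w.1 ≠ 0 ∧ (y.1 * w.1) * x.1 = 0 ∧ (y.1 * w.1) * z.1 = 0 ∧
          (y.1 * w.1) * v.1 = 0 :=
  stmt6_general R
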